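/- arXiv:2401.08597 — 3 statements merged into one kernel-verified Lean document; each statement's English description precedes it below -/
import Mathlib

section
/- For all natural numbers m and n with n ≤ m and m ≡ n (mod 2), the integral ∫₀^π (cos θ)^m · cos(nθ) dθ equals (π / 2^m) · C(m, (m−n)/2), where C(·,·) denotes the binomial coefficient. -/
/-!
Write `I m j = ∫₀^π (cos θ)^m cos (jθ) dθ` for `j ∈ ℤ`. Since
`cos θ · cos (jθ) = (cos ((j+1)θ) + cos ((j-1)θ)) / 2`, these integrals satisfy
`I (m+1) j = (I m (j+1) + I m (j-1)) / 2`, with `I 0 j = π` if `j = 0` and `0` otherwise.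
This is Pascal's rule in disguise: `I m (m - 2k) = π / 2^m · C(m, k)` for every `k : ℕ`
(both sides vanish for `k > m`), which gives the theorem with `k = (m - n) / 2`.
-/

open Real

lemma integral_cos_int_mul (j : ℤ) :
    ∫ θ in (0:ℝ)..π, cos (j * θ) = if j = 0 then π else 0 := by
  split_ifs with hj
  · simp [hj]
  · have hj' : (j : ℝ) ≠ 0 := Int.cast_ne_zero.mpr hj
    rw [intervalIntegral.integral_comp_mul_left cos hj', integral_cos]
    simp [sin_int_mul_pi]

lemma cos_mul_cos_mul (θ x : ℝ) :
    cos θ * cos (x * θ) = (cos ((x + 1) * θ) + cos ((x - 1) * θ)) / 2 := by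
  rw [add_mul, sub_mul, one_mul, cos_add, cos_sub]
  ring

lemma integral_cos_pow_succ_mul_cos_int_mul (a b : ℝ) (m : ℕ) (j : ℤ) :
    ∫ θ in a..b, cos θ ^ (m + 1) * cos (j * θ) =
      ((∫ θ in a..b, cos θ ^ m * cos (↑(j + 1) * θ)) +
        ∫ θ in a..b, cos θ ^ m * cos (↑(j - 1) * θ)) / 2 := by
  have hint (i : ℤ) :
      IntervalIntegrable (fun θ => cos θ ^ m * cos (i * θ)) MeasureTheory.volume a b :=
    (by fun_prop : Continuous _).intervalIntegrable _ _
  rw [← intervalIntegral.integral_add (hint _) (hint _), ← intervalIntegral.integral_div]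
  congr 1 with θ
  push_cast
  rw [pow_succ, mul_assoc, cos_mul_cos_mul]
  ring

lemma integral_cos_pow_mul_cos_sub_two_mul (m k : ℕ) :
    ∫ θ in (0:ℝ)..π, cos θ ^ m * cos (↑((m : ℤ) - 2 * k) * θ) = π / 2 ^ m * m.choose k := by
  induction m generalizing k with
  | zero =>
    simp only [pow_zero, one_mul, integral_cos_int_mul]
    rcases k with _ | k
    · simp
    · have hk : ((0 : ℕ) : ℤ) - 2 * (k + 1 : ℕ) ≠ 0 := by omega
      rw [if_neg hk]
      simp
  | succ m ih =>
    rw [integral_cos_pow_succ_mul_cos_int_mul]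
    rcases k with _ | k
    · -- `cos` is even: the index `m + 2` becomes `m - 2(m + 1)`, where `C(m, m + 1) = 0`.
      have hreflect : ∫ θ in (0:ℝ)..π, cos θ ^ m * cos (↑((m + 1 : ℕ) - 2 * (0 : ℕ) + 1 : ℤ) * θ) =
          ∫ θ in (0:ℝ)..π, cos θ ^ m * cos (↑((m : ℤ) - 2 * (m + 1 : ℕ)) * θ) := by
        congr 1 with θ
        rw [← cos_neg (_ * θ)]
        push_cast
        ring_nf
      have hm : ((m + 1 : ℕ) : ℤ) - 2 * (0 : ℕ) - 1 = m - 2 * (0 : ℕ) := by push_cast; ring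
      rw [hreflect, hm, ih, ih]
      simp only [Nat.choose_succ_self, Nat.choose_zero_right, pow_succ]
      push_cast
      ring
    · have h₁ : ((m + 1 : ℕ) : ℤ) - 2 * (k + 1 : ℕ) + 1 = m - 2 * k := by push_cast; ring
      have h₂ : ((m + 1 : ℕ) : ℤ) - 2 * (k + 1 : ℕ) - 1 = m - 2 * (k + 1 : ℕ) := by push_cast; ring
      rw [h₁, h₂, ih, ih, Nat.choose_succ_succ]
      push_cast
      ring

/-- **Corrected Gröbner–Hofreiter integral (even-parity branch on [0, π]).**
For natural numbers `m` and `n` with `n ≤ m` and `m ≡ n (mod 2)`,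
`∫₀^π (cos θ)^m · cos (n θ) dθ = (π / 2^m) · C(m, (m - n)/2)`. -/
theorem integral_cos_pow_mul_cos_of_even_parity (m n : ℕ) (hnm : n ≤ m)
    (hpar : m % 2 = n % 2) :
    ∫ θ in (0:ℝ)..π, (Real.cos θ) ^ m * Real.cos (n * θ) =
      π / 2 ^ m * (m.choose ((m - n) / 2)) := by
  have hn : ((m : ℤ) - 2 * ((m - n) / 2 : ℕ) : ℤ) = n := by omega
  rw [← integral_cos_pow_mul_cos_sub_two_mul, hn]
  norm_cast
end

section
/- For all natural numbers L and N with N ≤ L and L ≡ N (mod 2), and for every real number z, the following series identity holds: ∑_{M=0}^∞ C(L+2M, (L+2M−N)/2) · (−z/16)^M / (M! · Γ(L+M+3/2)) = (C(L, (L−N)/2) / Γ(L+3/2)) · ∑_{M=0}^∞ [ ((L+1)/2)_M · ((L+2)/2)_M / ( (L+3/2)_M · ((L−N)/2+1)_M · ((L+N)/2+1)_M ) ] · (−z/4)^M / M!, i.e., the series of binomial terms is a ₂F₃ hypergeometric series with parameters ((L+1)/2, L/2+1; L+3/2, (L−N)/2+1, (L+N)/2+1). -/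
/-!
The two series agree term by term, so no convergence argument is needed. With `k = (L - N)/2`, the `M`-th binomial
coefficient is `C(L + 2M, k + M)`. Writing every factorial `(n + M)!` as `n! (n+1)_M`, and
`(L + 2M)!` through the duplication formula `(a)_{2M} = 4^M (a/2)_M ((a+1)/2)_M`, turns it into
`C(L, k) 4^M ((L+1)/2)_M ((L+2)/2)_M / ((k+1)_M (L-k+1)_M)`, while
`Γ(L + M + 3/2) = Γ(L + 3/2) (L + 3/2)_M`.
-/

open Real

/-- The Pochhammer symbol (rising factorial) `(a)_M = a(a+1)⋯(a+M-1)`. -/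
noncomputable def poch (a : ℝ) (M : ℕ) : ℝ := ∏ i ∈ Finset.range M, (a + i)

open scoped Nat

lemma poch_zero (a : ℝ) : poch a 0 = 1 := rfl

lemma poch_succ (a : ℝ) (M : ℕ) : poch a (M + 1) = poch a M * (a + M) :=
  Finset.prod_range_succ _ _

lemma poch_pos {a : ℝ} (ha : 0 < a) (M : ℕ) : 0 < poch a M :=
  Finset.prod_pos fun _ _ => by positivity

lemma poch_two_mul (a : ℝ) (M : ℕ) :
    poch a (2 * M) = 4 ^ M * poch (a / 2) M * poch ((a + 1) / 2) M := by
  induction M with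
  | zero => simp [poch_zero]
  | succ M ih =>
      rw [show 2 * (M + 1) = 2 * M + 1 + 1 by ring, poch_succ, poch_succ, poch_succ, poch_succ, ih]
      push_cast
      ring

lemma Gamma_add_nat_eq_mul_poch {x : ℝ} (hx : 0 < x) (M : ℕ) :
    Gamma (x + M) = Gamma x * poch x M := by
  induction M with
  | zero => simp [poch_zero]
  | succ M ih =>
      rw [Nat.cast_succ, ← add_assoc, Gamma_add_one (by positivity), ih, poch_succ]
      ring

lemma factorial_add_eq_mul_poch (n m : ℕ) :
    ((n + m)! : ℝ) = n ! * poch (n + 1) m := by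
  induction m with
  | zero => simp [poch_zero]
  | succ m ih =>
      rw [← add_assoc, Nat.factorial_succ, poch_succ]
      push_cast
      rw [ih]
      ring

lemma factorial_add_two_mul (L M : ℕ) :
    ((L + 2 * M)! : ℝ) =
      L ! * 4 ^ M * poch (((L : ℝ) + 1) / 2) M * poch (((L : ℝ) + 2) / 2) M := by
  rw [factorial_add_eq_mul_poch, poch_two_mul, show ((L : ℝ) + 1 + 1) / 2 = (L + 2) / 2 by ring]
  ring

lemma choose_add_two_mul_mul_poch {L k : ℕ} (hk : k ≤ L) (M : ℕ) :
    ((L + 2 * M).choose (k + M) : ℝ) * poch ((k : ℝ) + 1) M * poch (((L - k : ℕ) : ℝ) + 1) M =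
      L.choose k * 4 ^ M * poch (((L : ℝ) + 1) / 2) M * poch (((L : ℝ) + 2) / 2) M := by
  have hsub : L + 2 * M - (k + M) = L - k + M := by omega
  rw [Nat.cast_choose ℝ (by omega : k + M ≤ L + 2 * M), Nat.cast_choose ℝ hk, hsub,
    factorial_add_two_mul, factorial_add_eq_mul_poch, factorial_add_eq_mul_poch]
  have hPk := poch_pos (a := (k : ℝ) + 1) (by positivity) M
  have hPl := poch_pos (a := ((L - k : ℕ) : ℝ) + 1) (by positivity) M
  field_simp

lemma choose_series_term_eq {L k : ℕ} (hk : k ≤ L) (x : ℝ) (M : ℕ) :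
    ((L + 2 * M).choose (k + M) : ℝ) * x ^ M / (M ! * Gamma ((L : ℝ) + M + 3 / 2)) =
      (L.choose k / Gamma ((L : ℝ) + 3 / 2)) *
        (poch (((L : ℝ) + 1) / 2) M * poch (((L : ℝ) + 2) / 2) M /
          (poch ((L : ℝ) + 3 / 2) M * poch ((k : ℝ) + 1) M * poch (((L - k : ℕ) : ℝ) + 1) M)) *
        (4 * x) ^ M / M ! := by
  have hpos : (0 : ℝ) < L + 3 / 2 := by positivity
  have hG := Gamma_pos_of_pos hpos
  have hP := poch_pos hpos M
  have hPk := poch_pos (a := (k : ℝ) + 1) (by positivity) M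
  have hPl := poch_pos (a := ((L - k : ℕ) : ℝ) + 1) (by positivity) M
  have key := choose_add_two_mul_mul_poch hk M
  rw [add_right_comm, Gamma_add_nat_eq_mul_poch hpos, mul_pow]
  -- otherwise `field_simp` rewrites `L + 3/2` inside these and `key` no longer matches
  generalize Gamma ((L : ℝ) + 3 / 2) = G at *
  generalize poch ((L : ℝ) + 3 / 2) M = P at *
  field_simp
  linear_combination x ^ M * key

/-- For `N ≤ L` with `L ≡ N (mod 2)`, the series of binomial terms equals a
`₂F₃` hypergeometric series with parameters
`((L+1)/2, L/2+1; L+3/2, (L-N)/2+1, (L+N)/2+1)` times `C(L, (L-N)/2)/Γ(L+3/2)`. -/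
theorem binomial_series_eq_2F3 (L N : ℕ) (hNL : N ≤ L) (hpar : L % 2 = N % 2)
    (z : ℝ) :
    ∑' M : ℕ, (((L + 2 * M).choose ((L + 2 * M - N) / 2)) : ℝ) * (-z / 16) ^ M /
        ((M.factorial : ℝ) * Real.Gamma ((L : ℝ) + (M : ℝ) + 3 / 2)) =
      ((L.choose ((L - N) / 2) : ℝ) / Real.Gamma ((L : ℝ) + 3 / 2)) *
        ∑' M : ℕ,
          (poch (((L : ℝ) + 1) / 2) M * poch (((L : ℝ) + 2) / 2) M /
            (poch ((L : ℝ) + 3 / 2) M * poch (((L : ℝ) - (N : ℝ)) / 2 + 1) M *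
              poch (((L : ℝ) + (N : ℝ)) / 2 + 1) M)) *
          (-z / 4) ^ M / (M.factorial : ℝ) := by
  obtain ⟨k, rfl⟩ : ∃ k, L = N + 2 * k := ⟨(L - N) / 2, by omega⟩
  have hlow : (((N + 2 * k : ℕ) : ℝ) - N) / 2 + 1 = (k : ℝ) + 1 := by push_cast; ring
  have hupp : (((N + 2 * k : ℕ) : ℝ) + N) / 2 + 1 = ((N + 2 * k - k : ℕ) : ℝ) + 1 := by
    rw [show N + 2 * k - k = N + k by omega]; push_cast; ring
  rw [show (N + 2 * k - N) / 2 = k by omega, hlow, hupp, ← tsum_mul_left]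
  refine tsum_congr fun M => ?_
  rw [show (N + 2 * k + 2 * M - N) / 2 = k + M by omega, choose_series_term_eq (by omega),
    show 4 * (-z / 16) = -z / 4 by ring]
  ring
end

section
/- For all natural numbers L and N with L ≡ N (mod 2) and every real number k, the Fourier–Legendre coefficient of the modified Bessel function, b_{LN}(k) = ((2L+1)/2) ∫_{−1}^{1} I_N(kx) P_L(x) dx, equals √π · (2L+1) · 2^{−2L−1} · k^L · ∑_{M=0}^∞ t_M, where t_M = (k²/16)^M · C(L+2M, (L+2M−N)/2) / (M! · Γ(L+M+3/2)) when L+2M ≥ N, and t_M = 0 when L+2M < N. -/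
open Real

/-- Modified Bessel function of the first kind of integer order `N`, defined by
its everywhere-convergent power series. -/
noncomputable def besselI (N : ℕ) (x : ℝ) : ℝ :=
  ∑' m : ℕ, (x / 2) ^ (2 * m + N) / ((m.factorial : ℝ) * ((m + N).factorial : ℝ))

/-- Legendre polynomial of degree `L` via Rodrigues' formula. -/
noncomputable def legendreP (L : ℕ) : Polynomial ℝ :=
  Polynomial.C (1 / ((2 : ℝ) ^ L * (L.factorial : ℝ))) *
    (⇑Polynomial.derivative)^[L] ((Polynomial.X ^ 2 - 1) ^ L)

/-- The Fourier–Legendre coefficient `b_{LN}(k)` of `I_N(k·)`. -/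
noncomputable def fourierLegendreCoeffI (L N : ℕ) (k : ℝ) : ℝ :=
  ((2 * (L : ℝ) + 1) / 2) * ∫ x in (-1:ℝ)..1, besselI N (k * x) * (legendreP L).eval x

/-!
Expand `I_N(kx) = ∑ₘ cₘ x^{2m+N}` and integrate term by term against `P_L` (dominated
convergence on `[-1, 1]`). By Rodrigues' formula and `L` integrations by parts, whose boundary
terms vanish because `±1` are roots of order `L` of `(x² - 1)^L`, the moment `∫ xⁿ P_L` is zero for
`n < L`, and for `n = L + 2M` it reduces to the beta integral
`∫ x^{2M} (1 - x²)^L = Γ(M + 1/2) L! / Γ(L + M + 3/2)`. The parity assumption makes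
`2m + N = L + 2M` a bijection between the surviving indices `m` and `M`, and matching terms agree.
-/

open Polynomial MeasureTheory Set
open scoped Nat

theorem Real.Gamma_nat_add_half_eq_factorial (M : ℕ) :
    Gamma (M + 1 / 2) = √π * (2 * M)! / (4 ^ M * M !) := by
  have hfac : ((2 * M)! : ℝ) = (2 * M - 1 : ℕ)‼ * 2 ^ M * M ! := by
    rcases M with _ | M
    · simp
    · rw [show 2 * (M + 1) = (2 * M + 1) + 1 by ring, Nat.factorial_eq_mul_doubleFactorial,
        show 2 * M + 1 + 1 = 2 * (M + 1) by ring, Nat.doubleFactorial_two_mul]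
      push_cast
      rw [show 2 * (M + 1) - 1 = 2 * M + 1 by omega]
      ring
  rw [Real.Gamma_nat_add_half, hfac, show (4 : ℝ) ^ M = 2 ^ M * 2 ^ M by rw [← mul_pow]; norm_num]
  field_simp

theorem Polynomial.eval_iterate_derivative_eq_zero_of_pow_dvd {R : Type*} [CommRing R]
    {p : R[X]} {a : R} {n i : ℕ} (h : (X - C a) ^ n ∣ p) (hi : i < n) :
    (derivative^[i] p).eval a = 0 :=
  dvd_iff_isRoot.mp <| (dvd_pow_self _ (Nat.sub_ne_zero_of_lt hi)).trans
    (pow_sub_dvd_iterate_derivative_of_pow_dvd i h)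

theorem intervalIntegral.integral_eval_mul_eval_iterate_derivative {a b : ℝ} (p q : ℝ[X]) (j : ℕ)
    (ha : ∀ i < j, (derivative^[i] q).eval a = 0) (hb : ∀ i < j, (derivative^[i] q).eval b = 0) :
    ∫ x in a..b, p.eval x * (derivative^[j] q).eval x
      = (-1) ^ j * ∫ x in a..b, (derivative^[j] p).eval x * q.eval x := by
  induction j generalizing q with
  | zero => simp
  | succ j ih =>
    have hparts := integral_mul_deriv_eq_deriv_mul (a := a) (b := b)
      (fun x _ => (derivative^[j] p).hasDerivAt x) (fun x _ => q.hasDerivAt x)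
      ((derivative (derivative^[j] p)).continuous.intervalIntegrable _ _)
      ((derivative q).continuous.intervalIntegrable _ _)
    rw [← Function.iterate_succ_apply' derivative] at hparts
    rw [Function.iterate_succ_apply, ih (derivative q) (fun i hi => ha (i + 1) (by omega))
      (fun i hi => hb (i + 1) (by omega)), hparts,
      show q.eval a = 0 from ha 0 j.succ_pos, show q.eval b = 0 from hb 0 j.succ_pos]
    ring

theorem integral_pow_two_mul_mul_one_sub_sq_pow (L M : ℕ) :
    ∫ x in (-1:ℝ)..1, x ^ (2 * M) * (1 - x ^ 2) ^ L
      = Gamma (M + 1 / 2) * L ! / Gamma (L + M + 3 / 2) := by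
  induction L generalizing M with
  | zero =>
    have hΓ : Gamma (M + 1 / 2) ≠ 0 := (Gamma_pos_of_pos (by positivity)).ne'
    rw [show ((0 : ℕ) : ℝ) + M + 3 / 2 = (M + 1 / 2) + 1 by push_cast; ring,
      Gamma_add_one (by positivity)]
    simp only [pow_zero, mul_one, integral_pow, one_pow,
      Odd.neg_one_pow (⟨M, rfl⟩ : Odd (2 * M + 1))]
    field_simp
    push_cast
    ring
  | succ L ih =>
    have hint : ∀ a, IntervalIntegrable (fun x : ℝ => x ^ a * (1 - x ^ 2) ^ L) volume (-1) 1 :=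
      fun a => Continuous.intervalIntegrable (by fun_prop) _ _
    have hsplit : ∫ x in (-1:ℝ)..1, x ^ (2 * M) * (1 - x ^ 2) ^ (L + 1)
        = (∫ x in (-1:ℝ)..1, x ^ (2 * M) * (1 - x ^ 2) ^ L)
          - ∫ x in (-1:ℝ)..1, x ^ (2 * (M + 1)) * (1 - x ^ 2) ^ L := by
      rw [← intervalIntegral.integral_sub (hint _) (hint _)]
      congr 1 with x
      ring
    have hΓ : Gamma (M + 1 / 2) ≠ 0 := (Gamma_pos_of_pos (by positivity)).ne'
    have hΓ' : Gamma (L + M + 3 / 2) ≠ 0 := (Gamma_pos_of_pos (by positivity)).ne'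
    rw [hsplit, ih, ih, show ((M + 1 : ℕ) : ℝ) + 1 / 2 = (M + 1 / 2) + 1 by push_cast; ring,
      show (L : ℝ) + ((M + 1 : ℕ) : ℝ) + 3 / 2 = (L + M + 3 / 2) + 1 by push_cast; ring,
      show ((L + 1 : ℕ) : ℝ) + M + 3 / 2 = (L + M + 3 / 2) + 1 by push_cast; ring,
      Gamma_add_one (by positivity), Gamma_add_one (by positivity), Nat.factorial_succ]
    field_simp
    push_cast
    ring

theorem integral_pow_mul_legendreP (L n : ℕ) :
    ∫ x in (-1:ℝ)..1, x ^ n * (legendreP L).eval x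
      = (-1) ^ L / (2 ^ L * L !) * ∫ x in (-1:ℝ)..1,
          (derivative^[L] (X ^ n : ℝ[X])).eval x * ((X ^ 2 - 1 : ℝ[X]) ^ L).eval x := by
  have hvanish : ∀ a : ℝ, a ^ 2 = 1 →
      ∀ i < L, (derivative^[i] ((X ^ 2 - 1 : ℝ[X]) ^ L)).eval a = 0 :=
    fun a ha _ hi => eval_iterate_derivative_eq_zero_of_pow_dvd
      (pow_dvd_pow_of_dvd (dvd_iff_isRoot.mpr (by simp [ha])) L) hi
  calc ∫ x in (-1:ℝ)..1, x ^ n * (legendreP L).eval x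
      = 1 / (2 ^ L * L !) * ∫ x in (-1:ℝ)..1,
          (X ^ n : ℝ[X]).eval x * (derivative^[L] ((X ^ 2 - 1 : ℝ[X]) ^ L)).eval x := by
        rw [← intervalIntegral.integral_const_mul]
        congr 1 with x
        simp only [legendreP, eval_mul, eval_C, eval_pow, eval_X]
        ring
    _ = _ := by
        rw [intervalIntegral.integral_eval_mul_eval_iterate_derivative _ _ _
          (hvanish (-1) (by norm_num)) (hvanish 1 (by norm_num))]
        ring

theorem integral_pow_mul_legendreP_of_lt {L n : ℕ} (hn : n < L) :
    ∫ x in (-1:ℝ)..1, x ^ n * (legendreP L).eval x = 0 := by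
  rw [integral_pow_mul_legendreP, iterate_derivative_X_pow_eq_C_mul,
    Nat.descFactorial_eq_zero_iff_lt.2 hn]
  simp

theorem integral_pow_add_two_mul_mul_legendreP (L M : ℕ) :
    ∫ x in (-1:ℝ)..1, x ^ (L + 2 * M) * (legendreP L).eval x
      = √π * (L + 2 * M)! / (2 ^ L * 4 ^ M * M ! * Gamma (L + M + 3 / 2)) := by
  have hdesc : ((2 * M)! : ℝ) * (L + 2 * M).descFactorial L = (L + 2 * M)! := by
    have h := Nat.factorial_mul_descFactorial (Nat.le_add_right L (2 * M))
    rw [Nat.add_sub_cancel_left] at h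
    exact_mod_cast h
  have hintegrand : ∀ x : ℝ, (derivative^[L] (X ^ (L + 2 * M) : ℝ[X])).eval x
      * ((X ^ 2 - 1 : ℝ[X]) ^ L).eval x
      = (-1) ^ L * (L + 2 * M).descFactorial L * (x ^ (2 * M) * (1 - x ^ 2) ^ L) := by
    intro x
    simp only [iterate_derivative_X_pow_eq_C_mul, Nat.add_sub_cancel_left, eval_mul, eval_C,
      eval_pow, eval_X, eval_sub, eval_one]
    rw [show x ^ 2 - 1 = -(1 - x ^ 2) by ring, neg_pow]
    ring
  have hΓ : Gamma (L + M + 3 / 2) ≠ 0 := (Gamma_pos_of_pos (by positivity)).ne'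
  simp_rw [integral_pow_mul_legendreP, hintegrand]
  rw [intervalIntegral.integral_const_mul, integral_pow_two_mul_mul_one_sub_sq_pow,
    Real.Gamma_nat_add_half_eq_factorial, ← hdesc]
  field_simp
  rw [← pow_mul, mul_comm, pow_mul]
  norm_num

theorem summable_besselI_coeff (N : ℕ) (x : ℝ) :
    Summable fun m : ℕ => (x / 2) ^ (2 * m + N) / (m ! * (m + N)! : ℝ) := by
  refine .of_norm_bounded ((Real.summable_pow_div_factorial (|x / 2| ^ 2)).mul_left (|x / 2| ^ N))
    fun m => ?_
  have hfac : (m ! : ℝ) ≤ m ! * (m + N)! :=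
    le_mul_of_one_le_right (by positivity) (by exact_mod_cast (m + N).factorial_pos)
  rw [norm_div, norm_pow, Real.norm_eq_abs, Real.norm_of_nonneg (by positivity), pow_add,
    pow_mul, mul_div_assoc', mul_comm]
  gcongr

theorem besselI_mul_eq_tsum (N : ℕ) (k x : ℝ) :
    besselI N (k * x)
      = ∑' m : ℕ, (k / 2) ^ (2 * m + N) / (m ! * (m + N)! : ℝ) * x ^ (2 * m + N) := by
  rw [besselI]
  congr 1 with m
  rw [mul_div_right_comm, mul_pow, div_mul_eq_mul_div]

theorem hasSum_intervalIntegral_tsum_pow_mul {c : ℕ → ℝ} (hc : Summable c) (n : ℕ → ℕ)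
    {g : ℝ → ℝ} (hg : Continuous g) :
    HasSum (fun m => c m * ∫ x in (-1:ℝ)..1, x ^ n m * g x)
      (∫ x in (-1:ℝ)..1, (∑' m, c m * x ^ n m) * g x) := by
  obtain ⟨C, hC⟩ := (isCompact_uIcc (a := (-1:ℝ)) (b := 1)).exists_bound_of_continuousOn
    hg.continuousOn
  have hpow : ∀ m, ∀ x ∈ uIcc (-1:ℝ) 1, ‖x ^ n m‖ ≤ 1 := fun m x hx => by
    rw [uIcc_of_le (by norm_num)] at hx
    rw [norm_pow]
    exact pow_le_one₀ (norm_nonneg _) (abs_le.2 hx)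
  have hbound : ∀ m, ∀ x ∈ uIcc (-1:ℝ) 1, ‖c m * (x ^ n m * g x)‖ ≤ |c m| * C := by
    intro m x hx
    rw [norm_mul, norm_mul, Real.norm_eq_abs (c m)]
    gcongr
    simpa using mul_le_mul (hpow m x hx) (hC x hx) (norm_nonneg _) zero_le_one
  simp_rw [← intervalIntegral.integral_const_mul]
  refine intervalIntegral.hasSum_integral_of_dominated_convergence (fun m _ => |c m| * C)
    (fun m => (Continuous.aestronglyMeasurable (by fun_prop)))
    (fun m => .of_forall fun x hx => hbound m x (uIoc_subset_uIcc hx))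
    (.of_forall fun _ _ => hc.abs.mul_right C) intervalIntegrable_const
    (.of_forall fun x hx => ?_)
  have hsum : Summable fun m => c m * x ^ n m :=
    .of_norm_bounded hc.abs fun m => by
      simpa [norm_mul] using
        mul_le_mul_of_nonneg_left (hpow m x (uIoc_subset_uIcc hx)) (abs_nonneg (c m))
  simpa only [mul_assoc] using hsum.hasSum.mul_right (g x)

theorem hasSum_fourierLegendreCoeffI (L N : ℕ) (k : ℝ) :
    HasSum (fun m => (2 * (L : ℝ) + 1) / 2 * ((k / 2) ^ (2 * m + N) / (m ! * (m + N)! : ℝ) *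
        ∫ x in (-1:ℝ)..1, x ^ (2 * m + N) * (legendreP L).eval x))
      (fourierLegendreCoeffI L N k) := by
  simp_rw [fourierLegendreCoeffI, besselI_mul_eq_tsum]
  exact (hasSum_intervalIntegral_tsum_pow_mul (summable_besselI_coeff N k) _
    (legendreP L).continuous).mul_left _

theorem tsum_eq_tsum_of_two_mul_add_eq {α : Type*} [AddCommMonoid α] [TopologicalSpace α]
    {L N : ℕ} (hpar : L % 2 = N % 2) {f g : ℕ → α}
    (hf : ∀ m, f m ≠ 0 → L ≤ 2 * m + N) (hg : ∀ M, g M ≠ 0 → N ≤ L + 2 * M)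
    (hfg : ∀ m M, 2 * m + N = L + 2 * M → f m = g M) :
    ∑' m, f m = ∑' M, g M := by
  refine tsum_eq_tsum_of_ne_zero_bij (fun M => (L + 2 * M.1 - N) / 2) ?_ ?_ ?_
  · rintro ⟨M, hM⟩ ⟨M', hM'⟩ (h : (L + 2 * M - N) / 2 = (L + 2 * M' - N) / 2)
    have hM := hg M hM
    have hM' := hg M' hM'
    exact Subtype.ext (show M = M' by omega)
  · intro m hm
    have hLm := hf m hm
    refine ⟨⟨(2 * m + N - L) / 2, ?_⟩, show (L + 2 * ((2 * m + N - L) / 2) - N) / 2 = m by omega⟩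
    rw [Function.mem_support, ← hfg m _ (by omega)]
    exact hm
  · rintro ⟨M, hM⟩
    have hNM := hg M hM
    show f ((L + 2 * M - N) / 2) = g M
    exact hfg _ _ (by omega)

theorem besselI_coeff_mul_legendre_moment {L N m M : ℕ} (h : 2 * m + N = L + 2 * M) (k : ℝ) :
    (2 * L + 1) / 2 * ((k / 2) ^ (L + 2 * M) / (m ! * (m + N)! : ℝ) *
      (√π * (L + 2 * M)! / (2 ^ L * 4 ^ M * M ! * Gamma (L + M + 3 / 2))))
    = √π * (2 * L + 1) * (2 : ℝ) ^ (-(2 * (L : ℤ)) - 1) * k ^ L *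
      ((k ^ 2 / 16) ^ M * ((L + 2 * M).choose m : ℝ) / (M ! * Gamma (L + M + 3 / 2))) := by
  have hchoose : ((L + 2 * M).choose m : ℝ) * m ! * (m + N)! = (L + 2 * M)! := by
    rw [show m + N = L + 2 * M - m by omega]
    exact_mod_cast Nat.choose_mul_factorial_mul_factorial (by omega)
  have hzpow : (2 : ℝ) ^ (-(2 * (L : ℤ)) - 1) = 1 / (2 ^ L * 2 ^ L * 2) := by
    rw [show -(2 * (L : ℤ)) - 1 = -((L + L + 1 : ℕ) : ℤ) by push_cast; ring, zpow_neg,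
      zpow_natCast, pow_succ, pow_add, one_div]
  have hΓ : Gamma (L + M + 3 / 2) ≠ 0 := (Gamma_pos_of_pos (by positivity)).ne'
  have hk : (k / 2) ^ (L + 2 * M) = k ^ L * (k ^ 2 / 16) ^ M * 4 ^ M / 2 ^ L := by
    rw [div_pow, div_pow, pow_add, pow_mul, pow_add, pow_mul, show (2 : ℝ) ^ 2 = 4 by norm_num,
      show (16 : ℝ) = 4 * 4 by norm_num, mul_pow]
    field_simp
  rw [hzpow, ← hchoose, hk]
  field_simp

/-- For `L ≡ N (mod 2)`, the Fourier–Legendre coefficient `b_{LN}(k)` equals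
`√π (2L+1) 2^{-2L-1} k^L ∑_M t_M` with
`t_M = (k²/16)^M C(L+2M, (L+2M-N)/2) / (M! Γ(L+M+3/2))` for `L + 2M ≥ N` and
`t_M = 0` otherwise. -/
theorem fourierLegendreCoeffI_eq_series (L N : ℕ) (hpar : L % 2 = N % 2) (k : ℝ) :
    fourierLegendreCoeffI L N k =
      Real.sqrt π * (2 * (L : ℝ) + 1) * (2 : ℝ) ^ (-(2 * (L : ℤ)) - 1) * k ^ L *
        ∑' M : ℕ,
          if N ≤ L + 2 * M then
            (k ^ 2 / 16) ^ M * (((L + 2 * M).choose ((L + 2 * M - N) / 2)) : ℝ) /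
              ((M.factorial : ℝ) * Real.Gamma ((L : ℝ) + (M : ℝ) + 3 / 2))
          else 0 := by
  rw [← (hasSum_fourierLegendreCoeffI L N k).tsum_eq, ← tsum_mul_left]
  refine tsum_eq_tsum_of_two_mul_add_eq hpar (fun m hm => ?_) (fun M hM => ?_) (fun m M h => ?_)
  · by_contra! hlt
    exact hm (by rw [integral_pow_mul_legendreP_of_lt hlt, mul_zero, mul_zero])
  · by_contra! hlt
    exact hM (by rw [if_neg hlt.not_ge, mul_zero])
  · rw [if_pos (by omega), show (L + 2 * M - N) / 2 = m by omega, h,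
      integral_pow_add_two_mul_mul_legendreP]
    exact besselI_coeff_mul_legendre_moment h k
end
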